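/- arXiv:1901.06191 — 7 statements merged into one kernel-verified Lean document; each statement's English description precedes it below -/
import Mathlib

section
/- In a coherent quantale A, for any a ∈ A and any compact element c, c ≤ ρ(a) if and only if cᵏ ≤ a for some natural number k ≥ 1, where ρ(a) = ⋀{p ∈ Spec(A) | a ≤ p} is the radical of a. -/
open CompleteLattice

/-- A commutative unital quantale: a complete lattice with a commutative monoid
multiplication distributing over arbitrary joins, whose unit is the top element. -/
class CommQuantale (A : Type*) extends CompleteLattice A, CommMonoid A where
  one_eq_top : (1 : A) = ⊤
  mul_sSup : ∀ (a : A) (S : Set A), a * sSup S = ⨆ b ∈ S, a * b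

namespace CommQuantale

variable {A : Type*} [CommQuantale A]

/-- A coherent quantale: algebraic, with `1 = ⊤` compact and compacts closed under `*`. -/
def Coherent (A : Type*) [CommQuantale A] : Prop :=
  (∀ a : A, a = sSup {c : A | IsCompactElement c ∧ c ≤ a}) ∧
  IsCompactElement (⊤ : A) ∧
  ∀ c d : A, IsCompactElement c → IsCompactElement d → IsCompactElement (c * d)

/-- m-prime element. -/
def MPrime (p : A) : Prop :=
  p < ⊤ ∧ ∀ a b : A, a * b ≤ p → a ≤ p ∨ b ≤ p

/-- The radical of an element. -/
def rad (a : A) : A := sInf {p : A | MPrime p ∧ a ≤ p}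

/-- Maximal element of `A \ {1}`. -/
def MaxElem (m : A) : Prop := m < ⊤ ∧ ∀ x : A, m ≤ x → x < ⊤ → x = m

/-- Radical element. -/
def RadElem (a : A) : Prop := rad a = a

/-- Residuation `a → b`. -/
def res (a b : A) : A := sSup {x : A | a * x ≤ b}

/-- Complemented element (member of the Boolean center `B(A)`). -/
def Complemented (e : A) : Prop := ∃ f : A, e ⊔ f = ⊤ ∧ e ⊓ f = ⊥

end CommQuantale

open CommQuantale

/-!
If no power of the compact element `c` lies below `a`, then, since the powers `c ^ k` are compact,
the elements above `a` avoiding all powers of `c` are closed under suprema of chains, so Zorn's lemma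
gives a maximal one `p`. Such a `p` is m-prime: if `x * y ≤ p` with `x, y ≰ p`, then by maximality
`c ^ m ≤ p ⊔ x` and `c ^ n ≤ p ⊔ y`, whence `c ^ (m + n) ≤ (p ⊔ x) * (p ⊔ y) ≤ p ⊔ x * y = p`.
Hence `rad a ≤ p` while `c ≰ p`. Conversely every m-prime `p ≥ a ≥ c ^ k` contains `c`.
-/

namespace CommQuantale

variable {A : Type*} [CommQuantale A]

theorem mul_sup (a b c : A) : a * (b ⊔ c) = a * b ⊔ a * c := by
  rw [← sSup_pair, mul_sSup, iSup_pair]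

instance : IsOrderedMonoid A where
  mul_le_mul_left b c hbc a := by
    rw [mul_comm b, mul_comm c, ← sup_eq_right.mpr hbc, mul_sup]
    exact le_sup_left

theorem mul_le_right (a b : A) : a * b ≤ b :=
  mul_le_of_le_one_left' (one_eq_top (A := A) ▸ le_top)

theorem sup_mul_sup_le_sup_mul (p x y : A) : (p ⊔ x) * (p ⊔ y) ≤ p ⊔ x * y := by
  rw [mul_sup, mul_comm _ y, mul_sup]
  exact sup_le (le_sup_of_le_left (mul_le_right _ _))
    (sup_le (le_sup_of_le_left (mul_le_right _ _)) (le_sup_of_le_right (mul_comm y x).le))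

theorem MPrime.le_of_pow_le {p c : A} (hp : MPrime p) {k : ℕ} (hk : 1 ≤ k) (hck : c ^ k ≤ p) :
    c ≤ p := by
  induction k, hk using Nat.le_induction with
  | base => simpa using hck
  | succ n _ ih =>
    rw [pow_succ] at hck
    exact (hp.2 _ _ hck).elim ih id

theorem Coherent.isCompactElement_pow (hA : Coherent A) {c : A} (hc : IsCompactElement c)
    {k : ℕ} (hk : 1 ≤ k) : IsCompactElement (c ^ k) := by
  induction k, hk using Nat.le_induction with
  | base => simpa using hc
  | succ n _ ih => simpa [pow_succ] using hA.2.2 _ _ ih hc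

def AvoidsPowers (c x : A) : Prop := ∀ k : ℕ, 1 ≤ k → ¬ c ^ k ≤ x

theorem AvoidsPowers.sSup_of_isChain {c : A} (hc : ∀ k : ℕ, 1 ≤ k → IsCompactElement (c ^ k))
    {t : Set A} (ht : ∀ x ∈ t, AvoidsPowers c x) (hne : t.Nonempty) (hchain : IsChain (· ≤ ·) t) :
    AvoidsPowers c (sSup t) := by
  intro k hk hle
  obtain ⟨x, hxt, hx⟩ :=
    (isCompactElement_iff_le_of_directed_sSup_le A _).mp (hc k hk) t hne hchain.directedOn hle
  exact ht x hxt k hk hx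

theorem exists_le_maximal_avoidsPowers {a c : A}
    (hc : ∀ k : ℕ, 1 ≤ k → IsCompactElement (c ^ k)) (ha : AvoidsPowers c a) :
    ∃ p, a ≤ p ∧ Maximal (AvoidsPowers c) p :=
  zorn_le_nonempty₀ {x | AvoidsPowers c x}
    (fun t ht hchain y hy => ⟨sSup t, AvoidsPowers.sSup_of_isChain hc ht ⟨y, hy⟩ hchain,
      fun _ hz => le_sSup hz⟩) a ha

theorem exists_pow_le_sup_of_maximal {c p x : A} (hp : Maximal (AvoidsPowers c) p)
    (hx : ¬ x ≤ p) : ∃ m : ℕ, 1 ≤ m ∧ c ^ m ≤ p ⊔ x := by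
  by_contra! h
  exact hx (le_sup_right.trans (hp.2 h le_sup_left))

theorem mPrime_of_maximal_avoidsPowers {c p : A} (hp : Maximal (AvoidsPowers c) p) :
    MPrime p := by
  refine ⟨lt_top_iff_ne_top.mpr fun htop => hp.1 1 le_rfl (htop ▸ le_top), fun x y hxy => ?_⟩
  by_contra! h
  obtain ⟨m, hm, hcm⟩ := exists_pow_le_sup_of_maximal hp h.1
  obtain ⟨n, hn, hcn⟩ := exists_pow_le_sup_of_maximal hp h.2
  refine hp.1 (m + n) (by omega) ?_
  calc c ^ (m + n) = c ^ m * c ^ n := pow_add c m n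
    _ ≤ (p ⊔ x) * (p ⊔ y) := mul_le_mul' hcm hcn
    _ ≤ p ⊔ x * y := sup_mul_sup_le_sup_mul p x y
    _ = p := sup_eq_left.mpr hxy

theorem le_rad_of_pow_le {a c : A} {k : ℕ} (hk : 1 ≤ k) (hck : c ^ k ≤ a) : c ≤ rad a :=
  le_sInf fun _ ⟨hp, hap⟩ => hp.le_of_pow_le hk (hck.trans hap)

end CommQuantale

theorem stmt6 {A : Type*} [CommQuantale A] (hA : Coherent A)
    (a c : A) (hc : IsCompactElement c) :
    c ≤ rad a ↔ ∃ k : ℕ, 1 ≤ k ∧ c ^ k ≤ a := by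
  refine ⟨fun hle => ?_, fun ⟨k, hk, hck⟩ => le_rad_of_pow_le hk hck⟩
  by_contra! ha
  obtain ⟨p, hap, hp⟩ := exists_le_maximal_avoidsPowers
    (fun k hk => hA.isCompactElement_pow hc hk) ha
  have hrad : rad a ≤ p := sInf_le ⟨mPrime_of_maximal_avoidsPowers hp, hap⟩
  exact hp.1 1 le_rfl (by simpa using hle.trans hrad)
end

section
/- If A is a coherent quantale then the compact elements of the frame R(A) of radical elements are exactly the radicals of compact elements of A: K(R(A)) = ρ(K(A)); consequently R(A) is a coherent frame. -/
open CompleteLattice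

open CommQuantale

/-- Compact element of the frame `R(A)` (join in `R(A)` is `rad` of the join in `A`). -/
def CompactR {A : Type*} [CommQuantale A] (r : A) : Prop :=
  RadElem r ∧ ∀ S : Set A, (∀ x ∈ S, RadElem x) → r ≤ rad (sSup S) →
    ∃ F : Finset A, ↑F ⊆ S ∧ r ≤ rad (F.sup id)

namespace CQAux

variable {A : Type*} [CommQuantale A]

theorem mul_le_mul_left'' (a : A) {b c : A} (h : b ≤ c) : a * b ≤ a * c := by
  have h2 : sSup {b, c} = c := by
    rw [sSup_insert, sSup_singleton, sup_eq_right.mpr h]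
  have := CommQuantale.mul_sSup a {b, c}
  rw [h2] at this
  rw [this]
  exact le_biSup _ (by simp)

theorem mul_le_left (a b : A) : a * b ≤ a := by
  have := mul_le_mul_left'' a (le_top : b ≤ ⊤)
  rwa [← CommQuantale.one_eq_top, mul_one] at this

theorem mul_le_right (a b : A) : a * b ≤ b := by
  rw [mul_comm]; exact mul_le_left b a

theorem mul_sup (a b c : A) : a * (b ⊔ c) = a * b ⊔ a * c := by
  have := CommQuantale.mul_sSup a {b, c}
  rw [show sSup {b, c} = b ⊔ c by rw [sSup_insert, sSup_singleton]] at this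
  rw [this, iSup_insert, iSup_singleton]

theorem le_rad (a : A) : a ≤ rad a := le_sInf fun _ hp => hp.2

theorem rad_mono {a b : A} (h : a ≤ b) : rad a ≤ rad b :=
  sInf_le_sInf fun p hp => ⟨hp.1, h.trans hp.2⟩

theorem rad_rad (a : A) : rad (rad a) = rad a := by
  refine le_antisymm (le_sInf fun p hp => ?_) (le_rad _)
  exact sInf_le ⟨hp.1, sInf_le hp⟩

theorem pow_le_prime {p c : A} (hp : MPrime p) : ∀ n : ℕ, c ^ n ≤ p → c ≤ p := by
  intro n
  induction n with
  | zero =>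
    intro h
    rw [pow_zero, CommQuantale.one_eq_top] at h
    exact absurd (top_le_iff.mp h) (ne_of_gt hp.1).symm
  | succ n ih =>
    intro h
    rw [pow_succ] at h
    rcases hp.2 _ _ h with h1 | h1
    · exact ih h1
    · exact h1

theorem pow_compact (hA : Coherent A) {c : A} (hc : IsCompactElement c) (n : ℕ) :
    IsCompactElement (c ^ n) := by
  induction n with
  | zero => rw [pow_zero, CommQuantale.one_eq_top]; exact hA.2.1
  | succ n ih => rw [pow_succ]; exact hA.2.2 _ _ ih hc

/-- Key lemma: for compact `c`, `c ≤ rad a ↔ ∃ n, cⁿ ≤ a`. -/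
theorem compact_le_rad_iff (hA : Coherent A) {c : A} (hc : IsCompactElement c) (a : A) :
    c ≤ rad a ↔ ∃ n : ℕ, c ^ n ≤ a := by
  constructor
  · intro hle
    by_contra hn
    push_neg at hn
    -- Zorn on T = {x | a ≤ x ∧ ∀ n, ¬ cⁿ ≤ x}
    set T : Set A := {x | a ≤ x ∧ ∀ n : ℕ, ¬ c ^ n ≤ x} with hT
    have haT : a ∈ T := ⟨le_rfl, hn⟩
    have hub : ∀ ch ⊆ T, IsChain (· ≤ ·) ch → ∀ y ∈ ch, ∃ ub ∈ T, ∀ z ∈ ch, z ≤ ub := by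
      intro ch hch hchain y hy
      refine ⟨sSup ch, ⟨le_trans (hch hy).1 (le_sSup hy), fun n hle2 => ?_⟩, fun z hz => le_sSup hz⟩
      have hdir : DirectedOn (· ≤ ·) ch := hchain.directedOn
      obtain ⟨x, hxch, hx⟩ :=
        (isCompactElement_iff_le_of_directed_sSup_le A (c ^ n)).mp (pow_compact hA hc n)
          ch ⟨y, hy⟩ hdir hle2
      exact (hch hxch).2 n hx
    obtain ⟨m, ham, hmT, hmax⟩ := zorn_le_nonempty₀ T hub a haT
    · -- m is m-prime
      have hmtop : m < ⊤ := by
        rcases lt_or_eq_of_le (le_top : m ≤ ⊤) with h | h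
        · exact h
        · exact absurd (h ▸ le_top : c ^ 0 ≤ m) (hmT.2 0)
      have hprime : MPrime m := by
        refine ⟨hmtop, fun x y hxy => ?_⟩
        by_contra hcon
        push_neg at hcon
        have hx : m ⊔ x ∉ T := by
          intro hmem
          exact hcon.1 (le_sup_right.trans (hmax hmem le_sup_left))
        have hy : m ⊔ y ∉ T := by
          intro hmem
          exact hcon.2 (le_sup_right.trans (hmax hmem le_sup_left))
        have hax' : a ≤ m ⊔ x := hmT.1.trans le_sup_left
        have hay' : a ≤ m ⊔ y := hmT.1.trans le_sup_left
        simp only [hT, Set.mem_setOf_eq, not_and, not_forall, not_not] at hx hy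
        obtain ⟨j, hj⟩ := hx hax'
        obtain ⟨k, hk⟩ := hy hay'
        have h1 : c ^ j * c ^ k ≤ (m ⊔ x) * (m ⊔ y) := by
          calc c ^ j * c ^ k ≤ c ^ j * (m ⊔ y) := mul_le_mul_left'' _ hk
            _ = (m ⊔ y) * c ^ j := mul_comm _ _
            _ ≤ (m ⊔ y) * (m ⊔ x) := mul_le_mul_left'' _ hj
            _ = (m ⊔ x) * (m ⊔ y) := mul_comm _ _
        have h2 : (m ⊔ x) * (m ⊔ y) ≤ m := by
          rw [mul_sup]
          refine sup_le (mul_le_right _ _) ?_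
          rw [mul_comm, mul_sup]
          refine sup_le (mul_le_right _ _) ?_
          rw [mul_comm]
          exact hxy
        have hjk : c ^ (j + k) ≤ m := by
          rw [pow_add]; exact h1.trans h2
        exact hmT.2 _ hjk
      have : rad a ≤ m := sInf_le ⟨hprime, hmT.1⟩
      have : c ≤ m := hle.trans this
      exact hmT.2 1 (by rwa [pow_one])
  · rintro ⟨n, hn⟩
    refine le_sInf fun p hp => ?_
    exact pow_le_prime hp.1 n (hn.trans hp.2)

theorem rad_radElem (a : A) : RadElem (rad a) := rad_rad a

/-- rad of a compact element is compact in R(A). -/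
theorem compactR_rad (hA : Coherent A) {c : A} (hc : IsCompactElement c) : CompactR (rad c) := by
  refine ⟨rad_radElem c, fun S hS hle => ?_⟩
  have hcle : c ≤ rad (sSup S) := (le_rad c).trans hle
  obtain ⟨n, hn⟩ := (compact_le_rad_iff hA hc (sSup S)).mp hcle
  obtain ⟨F, hFS, hF⟩ := (isCompactElement_iff_exists_le_sSup_of_le_sSup A _).mp (pow_compact hA hc n) S hn
  refine ⟨F, hFS, ?_⟩
  have : c ≤ rad (F.sup id) :=
    (compact_le_rad_iff hA hc _).mpr ⟨n, hF⟩
  calc rad c ≤ rad (rad (F.sup id)) := rad_mono this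
    _ = rad (F.sup id) := rad_rad _

theorem compactR_eq_rad_compact (hA : Coherent A) {r : A} (hr : CompactR r) :
    ∃ c : A, IsCompactElement c ∧ rad c = r := by
  classical
  set S : Set A := rad '' {c : A | IsCompactElement c ∧ c ≤ r} with hS
  have hrle : r ≤ rad (sSup S) := by
    have h1 : r = sSup {c : A | IsCompactElement c ∧ c ≤ r} := hA.1 r
    have h2 : sSup {c : A | IsCompactElement c ∧ c ≤ r} ≤ sSup S := by
      refine sSup_le fun c hc => ?_
      exact (le_rad c).trans (le_sSup ⟨c, hc, rfl⟩)
    exact (h1.le.trans h2).trans (le_rad _)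
  obtain ⟨F, hFS, hF⟩ := hr.2 S (by rintro x ⟨c, _, rfl⟩; exact rad_radElem c) hrle
  -- choose witnesses
  have hwit : ∀ x ∈ F, ∃ c : A, (IsCompactElement c ∧ c ≤ r) ∧ rad c = x := fun x hx => hFS hx
  choose! g hg1 hg2 using hwit
  refine ⟨F.sup g, isCompactElement_finsetSup F (fun x hx => (hg1 x hx).1), ?_⟩
  have hle1 : r ≤ rad (F.sup g) := by
    refine hF.trans ?_
    have : F.sup id ≤ rad (F.sup g) := by
      refine Finset.sup_le fun x hx => ?_
      have : x = rad (g x) := (hg2 x hx).symm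
      rw [id_eq, this]
      exact rad_mono (Finset.le_sup hx)
    calc rad (F.sup id) ≤ rad (rad (F.sup g)) := rad_mono this
      _ = rad (F.sup g) := rad_rad _
  have hle2 : rad (F.sup g) ≤ r := by
    have : F.sup g ≤ r := Finset.sup_le fun x hx => (hg1 x hx).2
    calc rad (F.sup g) ≤ rad r := rad_mono this
      _ = r := hr.1
  exact le_antisymm hle2 hle1

theorem rad_mul (c d : A) : rad (c * d) = rad c ⊓ rad d := by
  refine le_antisymm (le_inf (rad_mono (mul_le_left c d)) (rad_mono (mul_le_right c d))) ?_
  refine le_sInf fun p hp => ?_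
  rcases hp.1.2 c d hp.2 with h | h
  · exact inf_le_left.trans (sInf_le ⟨hp.1, h⟩)
  · exact inf_le_right.trans (sInf_le ⟨hp.1, h⟩)

end CQAux

open CQAux

theorem stmt9 {A : Type*} [CommQuantale A] (hA : Coherent A) :
    {r : A | CompactR r} = rad '' {c : A | IsCompactElement c} ∧
    (∀ r : A, RadElem r → r = rad (sSup {c : A | CompactR c ∧ c ≤ r})) ∧
    CompactR (⊤ : A) ∧
    (∀ c d : A, CompactR c → CompactR d → CompactR (c ⊓ d)) := by
  have hset : {r : A | CompactR r} = rad '' {c : A | IsCompactElement c} := by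
    ext r
    constructor
    · intro hr
      obtain ⟨c, hc, hcr⟩ := compactR_eq_rad_compact hA hr
      exact ⟨c, hc, hcr⟩
    · rintro ⟨c, hc, rfl⟩
      exact compactR_rad hA hc
  refine ⟨hset, ?_, ?_, ?_⟩
  · intro r hr
    set T : Set A := {c : A | CompactR c ∧ c ≤ r} with hT
    have h1 : r ≤ rad (sSup T) := by
      have hra : r = sSup {c : A | IsCompactElement c ∧ c ≤ r} := hA.1 r
      have h2 : sSup {c : A | IsCompactElement c ∧ c ≤ r} ≤ sSup T := by
        refine sSup_le fun c hc => ?_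
        refine (le_rad c).trans (le_sSup ⟨compactR_rad hA hc.1, ?_⟩)
        calc rad c ≤ rad r := rad_mono hc.2
          _ = r := hr
      exact (hra.le.trans h2).trans (le_rad _)
    have h2 : rad (sSup T) ≤ r := by
      have : sSup T ≤ r := sSup_le fun c hc => hc.2
      calc rad (sSup T) ≤ rad r := rad_mono this
        _ = r := hr
    exact le_antisymm h1 h2
  · have : rad (⊤ : A) = ⊤ := top_le_iff.mp (le_rad ⊤)
    have h := compactR_rad hA hA.2.1
    rwa [this] at h
  · intro c d hc hd
    obtain ⟨c₁, hc₁, rfl⟩ := compactR_eq_rad_compact hA hc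
    obtain ⟨d₁, hd₁, rfl⟩ := compactR_eq_rad_compact hA hd
    rw [← rad_mul]
    exact compactR_rad hA (hA.2.2 _ _ hc₁ hd₁)
end

section
/- Any two reticulations of a coherent quantale are isomorphic: if (L, λ) and (L', λ') are reticulations of A, then there is a bounded-lattice isomorphism f : L → L' with f ∘ λ = λ'. -/
/- Axiom (iii) determines the order on `L` from `A` alone: `λ a ≤ λ b` iff `aⁿ ≤ b` for some
`n ≥ 1`. So for two reticulations, `λ a ≤ λ b ↔ λ' a ≤ λ' b` on compacts, and since both maps are
onto from the compacts, `λ a ↦ λ' a` is a well-defined order isomorphism. -/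

open CompleteLattice

open CommQuantale

/-- A reticulation of a coherent quantale `A`: a bounded distributive lattice `L`
with a map `l` which is surjective from the compacts of `A` onto `L` and satisfies
the reticulation axioms on compact elements. -/
structure IsReticulation (A : Type*) [CommQuantale A] (L : Type*)
    [DistribLattice L] [BoundedOrder L] (l : A → L) : Prop where
  surj : ∀ y : L, ∃ c : A, IsCompactElement c ∧ l c = y
  le_sup : ∀ a b : A, IsCompactElement a → IsCompactElement b → l (a ⊔ b) ≤ l a ⊔ l b
  map_mul : ∀ a b : A, IsCompactElement a → IsCompactElement b → l (a * b) = l a ⊓ l b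
  le_iff : ∀ a b : A, IsCompactElement a → IsCompactElement b →
    (l a ≤ l b ↔ ∃ n : ℕ, 1 ≤ n ∧ a ^ n ≤ b)

open Function Set

theorem exists_orderIso_comp_eq_of_le_iff_le {α β γ : Type*} [PartialOrder β] [PartialOrder γ]
    {S : Set α} {f : α → β} {g : α → γ} (hf : SurjOn f S univ) (hg : SurjOn g S univ)
    (hfg : ∀ a ∈ S, ∀ b ∈ S, f a ≤ f b ↔ g a ≤ g b) :
    ∃ e : β ≃o γ, ∀ a ∈ S, e (f a) = g a := by
  choose s hs_mem hfs using fun y => hf (mem_univ y)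
  let e : β ↪o γ := OrderEmbedding.ofMapLEIff (g ∘ s) fun y z => by
    rw [comp_apply, comp_apply, ← hfg _ (hs_mem y) _ (hs_mem z), hfs, hfs]
  have he (a : α) (ha : a ∈ S) : e (f a) = g a := by
    have h₁ := hfg _ (hs_mem (f a)) _ ha
    have h₂ := hfg _ ha _ (hs_mem (f a))
    rw [hfs] at h₁ h₂
    exact le_antisymm (h₁.1 le_rfl) (h₂.1 le_rfl)
  have he_surj : Surjective e := fun z => by
    obtain ⟨a, ha, rfl⟩ := hg (mem_univ z)
    exact ⟨f a, he a ha⟩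
  exact ⟨OrderIso.ofSurjective e he_surj, he⟩

namespace IsReticulation

variable {A : Type*} [CommQuantale A] {L : Type*} [DistribLattice L] [BoundedOrder L] {l : A → L}

theorem surjOn (h : IsReticulation A L l) : SurjOn l {c | IsCompactElement c} univ :=
  fun y _ => h.surj y

theorem le_iff_le {L' : Type*} [DistribLattice L'] [BoundedOrder L'] {l' : A → L'}
    (h : IsReticulation A L l) (h' : IsReticulation A L' l') {a b : A}
    (ha : IsCompactElement a) (hb : IsCompactElement b) : l a ≤ l b ↔ l' a ≤ l' b := by
  rw [h.le_iff a b ha hb, h'.le_iff a b ha hb]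

end IsReticulation

theorem stmt10_general {A : Type*} [CommQuantale A]
    {L : Type*} [DistribLattice L] [BoundedOrder L]
    {L' : Type*} [DistribLattice L'] [BoundedOrder L']
    {l : A → L} {l' : A → L'}
    (h : IsReticulation A L l) (h' : IsReticulation A L' l') :
    ∃ f : L ≃o L', ∀ c : A, IsCompactElement c → f (l c) = l' c :=
  exists_orderIso_comp_eq_of_le_iff_le h.surjOn h'.surjOn fun _ ha _ hb => h.le_iff_le h' ha hb

theorem stmt10 {A : Type*} [CommQuantale A]
    {L : Type*} [DistribLattice L] [BoundedOrder L]
    {L' : Type*} [DistribLattice L'] [BoundedOrder L']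
    (hA : Coherent A) {l : A → L} {l' : A → L'}
    (h : IsReticulation A L l) (h' : IsReticulation A L' l') :
    ∃ f : L ≃o L', ∀ c : A, IsCompactElement c → f (l c) = l' c :=
  stmt10_general h h'
end

section
/- For a coherent quantale A, the maps Φ(a) = a* and Ψ(I) = I_* are mutually inverse frame isomorphisms between the frame R(A) of radical elements of A and the frame Id(L(A)) of ideals of the reticulation L(A). -/
open CompleteLattice

open CommQuantale

/-- An ideal of a lattice, as a set. -/
def IsIdealSet {L : Type*} [Lattice L] (I : Set L) : Prop :=
  I.Nonempty ∧ (∀ x ∈ I, ∀ y : L, y ≤ x → y ∈ I) ∧ ∀ x ∈ I, ∀ y ∈ I, x ⊔ y ∈ I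

/-- A prime ideal of a lattice, as a set. -/
def IsPrimeIdealSet {L : Type*} [Lattice L] (I : Set L) : Prop :=
  IsIdealSet I ∧ I ≠ Set.univ ∧ ∀ x y : L, x ⊓ y ∈ I → x ∈ I ∨ y ∈ I

/-- The ideal `a* = {l c | c compact, c ≤ a}` of the reticulation. -/
def qstar {A : Type*} [CommQuantale A] {L : Type*} (l : A → L) (a : A) : Set L :=
  l '' {c : A | IsCompactElement c ∧ c ≤ a}

/-- The element `I_* = ⋁{c compact | l c ∈ I}` of the quantale. -/
def qistar {A : Type*} [CommQuantale A] {L : Type*} (l : A → L) (I : Set L) : A :=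
  sSup {c : A | IsCompactElement c ∧ l c ∈ I}

section Aux

variable {A : Type*} [CommQuantale A]

lemma qmul_mono {a x y : A} (hxy : x ≤ y) : a * x ≤ a * y := by
  calc a * x ≤ ⨆ b ∈ ({x, y} : Set A), a * b :=
        le_iSup₂_of_le x (Set.mem_insert _ _) le_rfl
    _ = a * sSup {x, y} := (CommQuantale.mul_sSup a _).symm
    _ = a * y := by rw [sSup_pair, sup_eq_right.mpr hxy]

lemma qmul_le_right (a b : A) : a * b ≤ b := by
  calc a * b = b * a := mul_comm a b
    _ ≤ b * ⊤ := qmul_mono le_top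
    _ = b * 1 := by rw [CommQuantale.one_eq_top]
    _ = b := mul_one b

lemma qmul_sup (a b c : A) : a * (b ⊔ c) = a * b ⊔ a * c := by
  rw [← sSup_pair, CommQuantale.mul_sSup, iSup_pair]

lemma qle_rad (a : A) : a ≤ rad a := le_sInf fun _ hp => hp.2

lemma mprime_pow_le {p c : A} (hp : MPrime p) :
    ∀ n : ℕ, 1 ≤ n → c ^ n ≤ p → c ≤ p := by
  intro n
  induction n with
  | zero => omega
  | succ n ih =>
    intro _ hle
    rcases Nat.eq_or_lt_of_le (Nat.zero_le n) with h0 | h1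
    · simpa [← h0] using hle
    · rw [pow_succ] at hle
      rcases hp.2 _ _ hle with h' | h'
      · exact ih h1 h'
      · exact h'

lemma radElem_pow {a c : A} (ha : RadElem a) {n : ℕ} (hn : 1 ≤ n)
    (hle : c ^ n ≤ a) : c ≤ a := by
  rw [← ha]
  exact le_sInf fun p hp => mprime_pow_le hp.1 n hn (hle.trans hp.2)

lemma qbot_compact : IsCompactElement (⊥ : A) := by
  rw [isCompactElement_iff_exists_le_sSup_of_le_sSup]
  intro s _
  exact ⟨∅, by simp⟩

lemma qsup_compact {c d : A} (hc : IsCompactElement c) (hd : IsCompactElement d) :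
    IsCompactElement (c ⊔ d) := by
  classical
  rw [isCompactElement_iff_exists_le_sSup_of_le_sSup] at hc hd ⊢
  intro s hs
  obtain ⟨t1, ht1, ht1'⟩ := hc s (le_trans le_sup_left hs)
  obtain ⟨t2, ht2, ht2'⟩ := hd s (le_trans le_sup_right hs)
  refine ⟨t1 ∪ t2, ?_, sup_le (ht1'.trans (Finset.sup_mono Finset.subset_union_left))
    (ht2'.trans (Finset.sup_mono Finset.subset_union_right))⟩
  rw [Finset.coe_union]
  exact Set.union_subset ht1 ht2

lemma qpow_compact (hA : Coherent A) {c : A} (hc : IsCompactElement c) (n : ℕ) :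
    IsCompactElement (c ^ n) := by
  induction n with
  | zero => simpa [CommQuantale.one_eq_top] using hA.2.1
  | succ n ih => rw [pow_succ]; exact hA.2.2 _ _ ih hc

lemma qpow_le_self {c : A} {n : ℕ} (hn : 1 ≤ n) : c ^ n ≤ c := by
  obtain ⟨m, rfl⟩ := Nat.exists_eq_add_of_le hn
  rw [add_comm, pow_succ]
  exact qmul_le_right _ _

/-- Key lemma: a compact element is below `rad a` iff some power of it is below `a`. -/
lemma compact_le_rad_iff (hA : Coherent A) {c : A} (hc : IsCompactElement c) (a : A) :
    c ≤ rad a ↔ ∃ n : ℕ, 1 ≤ n ∧ c ^ n ≤ a := by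
  constructor
  · intro hle
    by_contra hcon
    push_neg at hcon
    set S : Set A := {x | a ≤ x ∧ ∀ n : ℕ, 1 ≤ n → ¬ c ^ n ≤ x} with hS
    have haS : a ∈ S := ⟨le_rfl, fun n hn h => hcon n hn h⟩
    have hchain : ∀ ch ⊆ S, IsChain (· ≤ ·) ch → ∀ y ∈ ch,
        ∃ ub ∈ S, ∀ z ∈ ch, z ≤ ub := by
      intro ch hch hchain y hy
      refine ⟨sSup ch, ⟨le_trans (hch hy).1 (le_sSup hy), ?_⟩, fun z hz => le_sSup hz⟩
      intro n hn hle'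
      obtain ⟨z, hz, hzle⟩ := (isCompactElement_iff_le_of_directed_sSup_le A _).mp
        (qpow_compact hA hc n) ch ⟨y, hy⟩ hchain.directedOn hle'
      exact (hch hz).2 n hn hzle
    obtain ⟨m, _, hmS, hmax⟩ := zorn_le_nonempty₀ S hchain a haS
    have hmtop : m < ⊤ := by
      rcases lt_or_eq_of_le (le_top : m ≤ ⊤) with h | h
      · exact h
      · exact absurd (h ▸ le_top) (by simpa using hmS.2 1 le_rfl)
    have hprime : MPrime m := by
      refine ⟨hmtop, fun x y hxy => ?_⟩
      by_contra hne
      push_neg at hne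
      obtain ⟨hx, hy⟩ := hne
      have hxS : m ⊔ x ∉ S := fun hmem => hx (le_sup_right.trans (hmax hmem le_sup_left))
      have hyS : m ⊔ y ∉ S := fun hmem => hy (le_sup_right.trans (hmax hmem le_sup_left))
      have hax : a ≤ m ⊔ x := hmS.1.trans le_sup_left
      have hay : a ≤ m ⊔ y := hmS.1.trans le_sup_left
      have hx' : ∃ n : ℕ, 1 ≤ n ∧ c ^ n ≤ m ⊔ x := by
        by_contra hc'; push_neg at hc'
        exact hxS ⟨hax, fun n hn h => hc' n hn h⟩
      have hy' : ∃ n : ℕ, 1 ≤ n ∧ c ^ n ≤ m ⊔ y := by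
        by_contra hc'; push_neg at hc'
        exact hyS ⟨hay, fun n hn h => hc' n hn h⟩
      obtain ⟨n, hn, hnle⟩ := hx'
      obtain ⟨k, hk, hkle⟩ := hy'
      have hmul : c ^ (n + k) ≤ m := by
        have h1 : c ^ (n + k) = c ^ n * c ^ k := pow_add c n k
        have h2 : c ^ n * c ^ k ≤ (m ⊔ x) * (m ⊔ y) :=
          le_trans (qmul_mono hkle) (by rw [mul_comm, mul_comm (m ⊔ x)]; exact qmul_mono hnle)
        have h3 : (m ⊔ x) * (m ⊔ y) ≤ m := by
          rw [qmul_sup]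
          refine sup_le (le_trans (qmul_le_right _ _) le_rfl) ?_
          have : (m ⊔ x) * y = y * m ⊔ y * x := by rw [mul_comm, qmul_sup]
          rw [this]
          exact sup_le (qmul_le_right _ _) (by rw [mul_comm]; exact hxy)
        exact h1 ▸ (h2.trans h3)
      exact hmS.2 (n + k) (by omega) hmul
    have : rad a ≤ m := sInf_le ⟨hprime, hmS.1⟩
    exact hmS.2 1 le_rfl (by simpa using hle.trans this)
  · rintro ⟨n, hn, hle⟩
    exact le_sInf fun p hp => mprime_pow_le hp.1 n hn (hle.trans hp.2)

variable {L : Type*} [DistribLattice L] [BoundedOrder L] {l : A → L}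

lemma ql_mono (h : IsReticulation A L l) {c d : A} (hc : IsCompactElement c)
    (hd : IsCompactElement d) (hcd : c ≤ d) : l c ≤ l d :=
  (h.le_iff c d hc hd).mpr ⟨1, le_rfl, by simpa using hcd⟩

lemma ql_sup_eq (h : IsReticulation A L l) {c d : A} (hc : IsCompactElement c)
    (hd : IsCompactElement d) : l (c ⊔ d) = l c ⊔ l d := by
  refine le_antisymm (h.le_sup c d hc hd) (sup_le ?_ ?_)
  · exact ql_mono h hc (qsup_compact hc hd) le_sup_left
  · exact ql_mono h hd (qsup_compact hc hd) le_sup_right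

lemma mem_qstar_le (h : IsReticulation A L l) {b : A} (hb : RadElem b) {c : A}
    (hc : IsCompactElement c) (hm : l c ∈ qstar l b) : c ≤ b := by
  obtain ⟨d, ⟨hd, hdb⟩, hld⟩ := hm
  obtain ⟨n, hn, hpow⟩ := (h.le_iff c d hc hd).mp hld.ge
  exact radElem_pow hb hn (hpow.trans hdb)

lemma qistar_set_directed (h : IsReticulation A L l) {I : Set L} (hI : IsIdealSet I) :
    ({c : A | IsCompactElement c ∧ l c ∈ I}).Nonempty ∧
    DirectedOn (· ≤ ·) {c : A | IsCompactElement c ∧ l c ∈ I} := by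
  constructor
  · obtain ⟨y, hy⟩ := hI.1
    obtain ⟨d, hd, rfl⟩ := h.surj y
    exact ⟨⊥, qbot_compact, hI.2.1 _ hy _ (ql_mono h qbot_compact hd bot_le)⟩
  · rintro x ⟨hx, hlx⟩ y ⟨hy, hly⟩
    refine ⟨x ⊔ y, ⟨qsup_compact hx hy, ?_⟩, le_sup_left, le_sup_right⟩
    have : l (x ⊔ y) ≤ l x ⊔ l y := h.le_sup x y hx hy
    exact hI.2.1 _ (hI.2.2 _ hlx _ hly) _ this

end Aux

theorem stmt14 {A : Type*} [CommQuantale A]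
    {L : Type*} [DistribLattice L] [BoundedOrder L]
    (hA : Coherent A) {l : A → L} (h : IsReticulation A L l) :
    (∀ a : A, RadElem a → IsIdealSet (qstar l a)) ∧
    (∀ I : Set L, IsIdealSet I → RadElem (qistar l I)) ∧
    (∀ a : A, RadElem a → qistar l (qstar l a) = a) ∧
    (∀ I : Set L, IsIdealSet I → qstar l (qistar l I) = I) ∧
    (∀ a b : A, RadElem a → RadElem b → (a ≤ b ↔ qstar l a ⊆ qstar l b)) := by
  -- part 1
  have part1 : ∀ a : A, RadElem a → IsIdealSet (qstar l a) := by
    intro a ha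
    refine ⟨⟨l ⊥, ⊥, ⟨qbot_compact, bot_le⟩, rfl⟩, ?_, ?_⟩
    · rintro x ⟨c, ⟨hc, hca⟩, rfl⟩ y hyx
      obtain ⟨d, hd, rfl⟩ := h.surj y
      obtain ⟨n, hn, hpow⟩ := (h.le_iff d c hd hc).mp hyx
      exact ⟨d, ⟨hd, radElem_pow ha hn (hpow.trans hca)⟩, rfl⟩
    · rintro x ⟨c, ⟨hc, hca⟩, rfl⟩ y ⟨d, ⟨hd, hda⟩, rfl⟩
      exact ⟨c ⊔ d, ⟨qsup_compact hc hd, sup_le hca hda⟩, ql_sup_eq h hc hd⟩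
  -- part 3
  have part3 : ∀ a : A, RadElem a → qistar l (qstar l a) = a := by
    intro a ha
    refine le_antisymm (sSup_le ?_) ?_
    · rintro c ⟨hc, hmem⟩
      exact mem_qstar_le h ha hc hmem
    · conv_lhs => rw [hA.1 a]
      refine sSup_le ?_
      rintro c ⟨hc, hca⟩
      exact le_sSup ⟨hc, ⟨c, ⟨hc, hca⟩, rfl⟩⟩
  -- membership in qstar of qistar
  have key4 : ∀ I : Set L, IsIdealSet I → ∀ c : A, IsCompactElement c →
      c ≤ qistar l I → l c ∈ I := by
    intro I hI c hc hle
    obtain ⟨hne, hdir⟩ := qistar_set_directed h hI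
    obtain ⟨d, ⟨hd, hld⟩, hcd⟩ :=
      (isCompactElement_iff_le_of_directed_sSup_le A _).mp hc _ hne hdir hle
    exact hI.2.1 _ hld _ (ql_mono h hc hd hcd)
  -- part 2
  have part2 : ∀ I : Set L, IsIdealSet I → RadElem (qistar l I) := by
    intro I hI
    refine le_antisymm ?_ (qle_rad _)
    conv_lhs => rw [hA.1 (rad (qistar l I))]
    refine sSup_le ?_
    rintro c ⟨hc, hcr⟩
    obtain ⟨n, hn, hpow⟩ := (compact_le_rad_iff hA hc _).mp hcr
    have hcn : l (c ^ n) ∈ I := key4 I hI _ (qpow_compact hA hc n) hpow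
    have hlc : l c ≤ l (c ^ n) :=
      (h.le_iff c (c ^ n) hc (qpow_compact hA hc n)).mpr ⟨n, hn, le_rfl⟩
    exact le_sSup ⟨hc, hI.2.1 _ hcn _ hlc⟩
  -- part 4
  have part4 : ∀ I : Set L, IsIdealSet I → qstar l (qistar l I) = I := by
    intro I hI
    ext x
    constructor
    · rintro ⟨c, ⟨hc, hci⟩, rfl⟩
      exact key4 I hI c hc hci
    · intro hx
      obtain ⟨c, hc, rfl⟩ := h.surj x
      exact ⟨c, ⟨hc, le_sSup ⟨hc, hx⟩⟩, rfl⟩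
  refine ⟨part1, part2, part3, part4, ?_⟩
  -- part 5
  intro a b ha hb
  constructor
  · intro hab
    rintro x ⟨c, ⟨hc, hca⟩, rfl⟩
    exact ⟨c, ⟨hc, hca.trans hab⟩, rfl⟩
  · intro hsub
    conv_lhs => rw [hA.1 a]
    refine sSup_le ?_
    rintro c ⟨hc, hca⟩
    exact mem_qstar_le h hb hc (hsub ⟨c, ⟨hc, hca⟩, rfl⟩)
end

section
/- In a commutative unital quantale, if a ∨ b = 1 and a·b = 0 then both a and b are complemented elements; moreover for any complemented e, a ∧ e = a·e and e → a = e^⊥ ∨ a. -/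
open CompleteLattice

open CommQuantale

/-! If `e ⊔ f = ⊤`, every `x` splits as `x = x * e ⊔ x * f`, because `⊤` is the unit and
multiplication distributes over joins. When moreover `e * f = ⊥`, the summand `x * f` is
negligible in each claim: for `x = a ⊓ e` it lies below `e * f = ⊥`, for `x = e → a` below
`e → ⊥`, and for `x = a ⊓ b` with `a * b = ⊥` both summands lie below `a * b`. -/

namespace CommQuantale

variable {A : Type*} [CommQuantale A]

instance inst_s15 : IsOrderedMonoid A where
  mul_le_mul_left a b hab c := by
    rw [mul_comm a, mul_comm b, ← sup_eq_right, ← mul_sup, sup_eq_right.2 hab]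

theorem mul_le_left (a b : A) : a * b ≤ a :=
  mul_le_of_le_one_right' (one_eq_top (A := A) ▸ le_top)

theorem mul_le_inf (a b : A) : a * b ≤ a ⊓ b :=
  le_inf (mul_le_left a b) (mul_comm a b ▸ mul_le_left b a)

theorem mul_eq_bot_of_inf_eq_bot {a b : A} (h : a ⊓ b = ⊥) : a * b = ⊥ :=
  le_bot_iff.1 (h ▸ mul_le_inf a b)

theorem le_res_iff {e a x : A} : x ≤ res e a ↔ e * x ≤ a := by
  refine ⟨fun hx => (mul_le_mul_right hx e).trans ?_, fun hx => le_sSup hx⟩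
  rw [res, mul_sSup]
  exact iSup₂_le fun _ hy => hy

theorem mul_res_le (e a : A) : e * res e a ≤ a :=
  le_res_iff.1 le_rfl

theorem res_mono_right (e : A) : Monotone (res e) :=
  fun _ _ hab => le_res_iff.2 ((mul_res_le e _).trans hab)

theorem le_res_self (e a : A) : a ≤ res e a :=
  le_res_iff.2 (mul_comm e a ▸ mul_le_left a e)

theorem eq_mul_sup_mul_of_sup_eq_top {e f : A} (h : e ⊔ f = ⊤) (x : A) :
    x = x * e ⊔ x * f := by
  rw [← mul_sup, h, ← one_eq_top, mul_one]

theorem inf_eq_bot_of_sup_eq_top_of_mul_eq_bot {a b : A} (hsup : a ⊔ b = ⊤)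
    (hmul : a * b = ⊥) : a ⊓ b = ⊥ := by
  refine le_bot_iff.1 ?_
  calc a ⊓ b = (a ⊓ b) * a ⊔ (a ⊓ b) * b := eq_mul_sup_mul_of_sup_eq_top hsup _
    _ ≤ b * a ⊔ a * b := sup_le_sup (mul_le_mul_left inf_le_right a)
          (mul_le_mul_left inf_le_left b)
    _ = ⊥ := by rw [mul_comm b a, hmul, sup_idem]

theorem complemented_of_sup_eq_top_of_mul_eq_bot {a b : A} (hsup : a ⊔ b = ⊤)
    (hmul : a * b = ⊥) : Complemented a :=
  ⟨b, hsup, inf_eq_bot_of_sup_eq_top_of_mul_eq_bot hsup hmul⟩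

theorem inf_eq_mul_of_sup_eq_top_of_mul_eq_bot {e f : A} (hsup : e ⊔ f = ⊤)
    (hmul : e * f = ⊥) (a : A) : a ⊓ e = a * e := by
  refine le_antisymm ?_ (mul_le_inf a e)
  calc a ⊓ e = (a ⊓ e) * e ⊔ (a ⊓ e) * f := eq_mul_sup_mul_of_sup_eq_top hsup _
    _ ≤ a * e ⊔ e * f := sup_le_sup (mul_le_mul_left inf_le_left e)
          (mul_le_mul_left inf_le_right f)
    _ = a * e := by rw [hmul, sup_bot_eq]

theorem res_eq_res_bot_sup_of_sup_eq_top_of_mul_eq_bot {e f : A} (hsup : e ⊔ f = ⊤)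
    (hmul : e * f = ⊥) (a : A) : res e a = res e ⊥ ⊔ a := by
  refine le_antisymm ?_ (sup_le (res_mono_right e bot_le) (le_res_self e a))
  have hf : res e a * f ≤ res e ⊥ := le_res_iff.2 <| by
    rw [mul_left_comm, hmul]
    exact (mul_le_inf _ _).trans inf_le_right
  calc res e a = res e a * e ⊔ res e a * f := eq_mul_sup_mul_of_sup_eq_top hsup _
    _ ≤ a ⊔ res e ⊥ := sup_le_sup (mul_comm e (res e a) ▸ mul_res_le e a) hf
    _ = res e ⊥ ⊔ a := sup_comm _ _

end CommQuantale

theorem stmt15 {A : Type*} [CommQuantale A] :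
    (∀ a b : A, a ⊔ b = 1 → a * b = ⊥ → Complemented a ∧ Complemented b) ∧
    (∀ a e : A, Complemented e → a ⊓ e = a * e ∧ res e a = res e ⊥ ⊔ a) := by
  refine ⟨fun a b hsup hmul => ?_, fun a e ⟨f, hsup, hinf⟩ => ?_⟩
  · rw [one_eq_top] at hsup
    exact ⟨complemented_of_sup_eq_top_of_mul_eq_bot hsup hmul,
      complemented_of_sup_eq_top_of_mul_eq_bot (sup_comm a b ▸ hsup) (mul_comm a b ▸ hmul)⟩
  · have hmul := mul_eq_bot_of_inf_eq_bot hinf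
    exact ⟨inf_eq_mul_of_sup_eq_top_of_mul_eq_bot hsup hmul a,
      res_eq_res_bot_sup_of_sup_eq_top_of_mul_eq_bot hsup hmul a⟩
end

section
/- In a coherent quantale A, every complemented element is compact: B(A) ⊆ K(A). -/
open CompleteLattice

open CommQuantale

lemma myMulMono {A : Type*} [CommQuantale A] (a : A) {b c : A} (h : b ≤ c) :
    a * b ≤ a * c := by
  have hc : a * c = a * sSup {b, c} := by
    rw [sSup_pair, sup_eq_right.mpr h]
  rw [hc, CommQuantale.mul_sSup]
  exact le_iSup₂ (f := fun x (_ : x ∈ ({b, c} : Set A)) => a * x) b (by simp)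

lemma myMulSup {A : Type*} [CommQuantale A] (a x y : A) :
    a * (x ⊔ y) = a * x ⊔ a * y := by
  rw [← sSup_pair, CommQuantale.mul_sSup, iSup_pair]

theorem stmt16 {A : Type*} [CommQuantale A] (hA : Coherent A) :
    ∀ e : A, Complemented e → IsCompactElement e := by
  rintro e ⟨f, hsup, hinf⟩
  rw [isCompactElement_iff_exists_le_sSup_of_le_sSup]
  intro s hes
  classical
  obtain ⟨-, htop, -⟩ := hA
  have h1 : (⊤ : A) ≤ sSup (insert f s) := by
    rw [← hsup]
    exact sup_le (hes.trans (sSup_le_sSup (Set.subset_insert f s)))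
      (le_sSup (Set.mem_insert f s))
  obtain ⟨t, hts, hle⟩ := (isCompactElement_iff_exists_le_sSup_of_le_sSup (k := (⊤ : A))).mp htop _ h1
  refine ⟨t.erase f, ?_, ?_⟩
  · intro x hx
    simp only [Finset.coe_erase, Set.mem_diff, Set.mem_singleton_iff] at hx
    rcases hts hx.1 with h | h
    · exact absurd h hx.2
    · exact h
  · have ht' : t.sup id ≤ (t.erase f).sup id ⊔ f := by
      apply Finset.sup_le
      intro x hx
      by_cases hxf : x = f
      · exact hxf ▸ le_sup_right
      · exact le_sup_of_le_left (Finset.le_sup (f := id) (Finset.mem_erase.mpr ⟨hxf, hx⟩))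
    have hef : e * f ≤ ⊥ := by
      rw [← hinf]
      refine le_inf ?_ ?_
      · calc e * f ≤ e * 1 := myMulMono e (CommQuantale.one_eq_top (A := A) ▸ le_top)
          _ = e := mul_one e
      · calc e * f = f * e := mul_comm e f
          _ ≤ f * 1 := myMulMono f (CommQuantale.one_eq_top (A := A) ▸ le_top)
          _ = f := mul_one f
    calc e = e * 1 := (mul_one e).symm
      _ = e * ⊤ := by rw [CommQuantale.one_eq_top]
      _ ≤ e * ((t.erase f).sup id ⊔ f) := myMulMono e (le_trans hle ht')
      _ = e * (t.erase f).sup id ⊔ e * f := myMulSup ..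
      _ ≤ (t.erase f).sup id ⊔ ⊥ := sup_le_sup (by
            calc e * (t.erase f).sup id = (t.erase f).sup id * e := mul_comm ..
              _ ≤ (t.erase f).sup id * 1 := myMulMono _ (CommQuantale.one_eq_top (A := A) ▸ le_top)
              _ = (t.erase f).sup id := mul_one _) hef
      _ = (t.erase f).sup id := sup_bot_eq _
end

section
/- A coherent quantale A is normal (for all a, b with a ∨ b = 1 there exist e, f with a ∨ e = b ∨ f = 1 and e·f = 0) if and only if for all compact c, d with c ∨ d = 1 there exist compact e, f with c ∨ e = d ∨ f = 1 and e·f = 0. -/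
open CompleteLattice

open CommQuantale


lemma myaux_mul_sup {A : Type*} [CommQuantale A] (c a b : A) :
    c * (a ⊔ b) = c * a ⊔ c * b := by
  rw [← sSup_pair, CommQuantale.mul_sSup, iSup_pair]

lemma myaux_mul_le_mul {A : Type*} [CommQuantale A] {a b : A} (c : A) (h : a ≤ b) :
    c * a ≤ c * b := by
  have : c * b = c * a ⊔ c * b := by
    rw [← myaux_mul_sup, sup_eq_right.mpr h]
  rw [this]; exact le_sup_left

/-- Extract a compact part: if `⊤ ≤ c ⊔ sSup S` with all elements of `S` compact,
there is a compact `e ≤ sSup S` with `c ⊔ e = ⊤`. -/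
lemma myaux_extract {A : Type*} [CompleteLattice A] (htop : IsCompactElement (⊤ : A))
    {c : A} {S : Set A} (hS : ∀ x ∈ S, IsCompactElement x) (h : (⊤ : A) ≤ c ⊔ sSup S) :
    ∃ e : A, IsCompactElement e ∧ e ≤ sSup S ∧ c ⊔ e = ⊤ := by
  classical
  have h' : (⊤ : A) ≤ sSup (insert c S) := by rwa [sSup_insert]
  obtain ⟨t, hts, ht⟩ := (isCompactElement_iff_exists_le_sSup_of_le_sSup (k := ⊤)).mp htop _ h'
  refine ⟨(t.erase c).sup id, ?_, ?_, ?_⟩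
  · exact isCompactElement_finsetSup _ fun x hx => by
      have hx' := hts (Finset.mem_of_mem_erase hx)
      rcases hx' with h1 | h2
      · exact absurd h1 (Finset.ne_of_mem_erase hx)
      · exact hS x h2
  · refine Finset.sup_le fun x hx => ?_
    have hx' := hts (Finset.mem_of_mem_erase hx)
    rcases hx' with h1 | h2
    · exact absurd h1 (Finset.ne_of_mem_erase hx)
    · exact le_sSup h2
  · refine le_antisymm le_top ?_
    refine ht.trans (Finset.sup_le fun x hx => ?_)
    by_cases hxc : x = c
    · subst hxc; exact le_sup_left
    · exact le_sup_of_le_right (Finset.le_sup (Finset.mem_erase.mpr ⟨hxc, hx⟩))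

/-- NormalQuantale quantale. -/
def NormalQuantale (A : Type*) [CommQuantale A] : Prop :=
  ∀ a b : A, a ⊔ b = 1 → ∃ e f : A, a ⊔ e = 1 ∧ b ⊔ f = 1 ∧ e * f = ⊥

theorem stmt19 {A : Type*} [CommQuantale A] (hA : Coherent A) :
    NormalQuantale A ↔
      ∀ c d : A, IsCompactElement c → IsCompactElement d → c ⊔ d = 1 →
        ∃ e f : A, IsCompactElement e ∧ IsCompactElement f ∧
          c ⊔ e = 1 ∧ d ⊔ f = 1 ∧ e * f = ⊥ := by
  obtain ⟨halg, htop, hmul⟩ := hA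
  have h1t : (1 : A) = ⊤ := CommQuantale.one_eq_top
  constructor
  · intro hnorm c d hc hd hcd
    obtain ⟨e, f, hce, hdf, hef⟩ := hnorm c d hcd
    -- extract compact e' ≤ e with c ⊔ e' = ⊤
    have he : e = sSup {x : A | IsCompactElement x ∧ x ≤ e} := halg e
    have hf : f = sSup {x : A | IsCompactElement x ∧ x ≤ f} := halg f
    obtain ⟨e', he'c, he'le, hce'⟩ := myaux_extract (S := {x : A | IsCompactElement x ∧ x ≤ e}) htop
      (fun x hx => hx.1) (by rw [← he, ← h1t, hce])
    obtain ⟨f', hf'c, hf'le, hdf'⟩ := myaux_extract (S := {x : A | IsCompactElement x ∧ x ≤ f}) htop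
      (fun x hx => hx.1) (by rw [← hf, ← h1t, hdf])
    refine ⟨e', f', he'c, hf'c, by rw [h1t, hce'], by rw [h1t, hdf'], ?_⟩
    have h1 : e' * f' ≤ e * f := by
      calc e' * f' ≤ e' * f := myaux_mul_le_mul e' (hf'le.trans hf.ge)
        _ = f * e' := mul_comm _ _
        _ ≤ f * e := myaux_mul_le_mul f (he'le.trans he.ge)
        _ = e * f := mul_comm _ _
    exact le_antisymm (hef ▸ h1) bot_le
  · intro H a b hab
    classical
    set Sa := {x : A | IsCompactElement x ∧ x ≤ a} with hSa
    set Sb := {x : A | IsCompactElement x ∧ x ≤ b} with hSb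
    have ha : a = sSup Sa := halg a
    have hb : b = sSup Sb := halg b
    have h' : (⊤ : A) ≤ sSup (Sa ∪ Sb) := by
      rw [sSup_union, ← ha, ← hb, ← h1t, hab]
    obtain ⟨t, hts, ht⟩ := (isCompactElement_iff_exists_le_sSup_of_le_sSup (k := ⊤)).mp htop _ h'
    set t1 := t.filter (· ∈ Sa) with ht1
    set t2 := t.filter (· ∉ Sa) with ht2
    have hc : IsCompactElement (t1.sup id) :=
      isCompactElement_finsetSup _ fun x hx => ((Finset.mem_filter.mp hx).2).1
    have hd : IsCompactElement (t2.sup id) := by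
      refine isCompactElement_finsetSup _ fun x hx => ?_
      have hx' := Finset.mem_filter.mp hx
      rcases hts hx'.1 with h1 | h2
      · exact absurd h1 hx'.2
      · exact h2.1
    have hca : t1.sup id ≤ a :=
      Finset.sup_le fun x hx => ((Finset.mem_filter.mp hx).2).2
    have hdb : t2.sup id ≤ b := by
      refine Finset.sup_le fun x hx => ?_
      have hx' := Finset.mem_filter.mp hx
      rcases hts hx'.1 with h1 | h2
      · exact absurd h1 hx'.2
      · exact h2.2
    have hcd : t1.sup id ⊔ t2.sup id = 1 := by
      rw [h1t]
      refine le_antisymm le_top (ht.trans (Finset.sup_le fun x hx => ?_))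
      by_cases hxa : x ∈ Sa
      · exact le_sup_of_le_left (Finset.le_sup (Finset.mem_filter.mpr ⟨hx, hxa⟩))
      · exact le_sup_of_le_right (Finset.le_sup (Finset.mem_filter.mpr ⟨hx, hxa⟩))
    obtain ⟨e, f, _, _, hce, hdf, hef⟩ := H _ _ hc hd hcd
    refine ⟨e, f, ?_, ?_, hef⟩
    · rw [h1t]; rw [h1t] at hce
      exact le_antisymm le_top (hce ▸ sup_le_sup_right hca e)
    · rw [h1t]; rw [h1t] at hdf
      exact le_antisymm le_top (hdf ▸ sup_le_sup_right hdb f)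
end
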